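/- arXiv:1001.1055 — 6 statements merged into one kernel-verified Lean document; each statement's English description precedes it below -/
import Mathlib

section
/- Let F₁,…,F_r be homogeneous forms of degrees d₁,…,d_r in m variables over a finite field 𝔽_q. If m > δ := d₁+⋯+d_r, then the system has at least q^(m−δ) common affine zeros in 𝔽_q^m. -/
/-!
The polynomial `f = ∏ i, (1 - P i ^ (q - 1))` takes the value `1` at the common zeros of the
`P i` and `0` elsewhere, has total degree at most `δ (q - 1)`, and is nonzero at the trivial zero.
Reducing its exponents modulo `x ^ q = x` keeps its values and its degree bound and makes every
partial degree at most `q - 1`. Such a reduced nonzero polynomial in `m` variables of total degree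
at most `a (q - 1) + b`, `b < q - 1`, is nonzero at `(q - b) q ^ (m - a - 1)` points or more: slice
it along `x₀ = c`; if `t` slices vanish identically then `∏ (X₀ - c)` over them divides it, so
`t ≤ q - 1` and the remaining `q - t` slices have degree at most `a (q - 1) + b - t`, which the
induction hypothesis turns into the bound.
-/

theorem Nat.sub_mul_le_sub_mul_sub_sub {q b t : ℕ} (htb : t ≤ b) (hbq : b ≤ q) :
    (q - b) * q ≤ (q - t) * (q - (b - t)) := by
  zify [htb, hbq, htb.trans hbq, (Nat.sub_le b t).trans hbq]
  nlinarith

theorem Nat.sub_le_sub_mul_sub_add_one {q b t : ℕ} (hbt : b ≤ t) (htq : t < q) :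
    q - b ≤ (q - t) * (t - b + 1) := by
  zify [htq.le, hbt, hbt.trans htq.le]
  have h1 : (0 : ℤ) ≤ q - t - 1 := by omega
  have h2 : (0 : ℤ) ≤ t - b := by omega
  nlinarith [mul_nonneg h1 h2]

namespace MvPolynomial

theorem mem_restrictDegree_iff_degreeOf_le {σ R : Type*} [CommSemiring R] (p : MvPolynomial σ R)
    (d : ℕ) : p ∈ restrictDegree σ R d ↔ ∀ i, degreeOf i p ≤ d := by
  classical
  simp [mem_restrictDegree_iff_sup, degreeOf_def]

section Slice

variable {R : Type*} [CommRing R] {n : ℕ}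

noncomputable def sliceAt (c : R) : MvPolynomial (Fin (n + 1)) R →+* MvPolynomial (Fin n) R :=
  (Polynomial.evalRingHom (C c)).comp (finSuccEquiv R n).toRingHom

theorem sliceAt_apply (c : R) (f : MvPolynomial (Fin (n + 1)) R) :
    sliceAt c f = Polynomial.eval (C c) (finSuccEquiv R n f) := rfl

theorem eval_sliceAt (c : R) (s : Fin n → R) (f : MvPolynomial (Fin (n + 1)) R) :
    eval s (sliceAt c f) = eval (Fin.cons c s) f := by
  rw [sliceAt_apply, eval_eq_eval_mv_eval', Polynomial.eval, Polynomial.hom_eval₂,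
    Polynomial.eval_map, eval_C]
  rfl

theorem finSuccEquiv_X_zero_sub_C (c : R) :
    finSuccEquiv R n (X 0 - C c) = Polynomial.X - Polynomial.C (C c) := by
  simp [finSuccEquiv_apply]

theorem sliceAt_X_zero_sub_C (c c' : R) :
    sliceAt c (X 0 - C c' : MvPolynomial (Fin (n + 1)) R) = C (c - c') := by
  simp [sliceAt_apply, finSuccEquiv_X_zero_sub_C]

theorem degreeOf_sliceAt_le (c : R) (f : MvPolynomial (Fin (n + 1)) R) (j : Fin n) :
    degreeOf j (sliceAt c f) ≤ degreeOf j.succ f := by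
  rw [sliceAt_apply, Polynomial.eval_eq_sum_range]
  refine (degreeOf_sum_le _ _ _).trans (Finset.sup_le fun i _ => ?_)
  rw [mul_comm, ← map_pow]
  exact (degreeOf_C_mul_le _ _ _).trans (degreeOf_coeff_finSuccEquiv f j i)

theorem totalDegree_sliceAt_le (c : R) (f : MvPolynomial (Fin (n + 1)) R) :
    totalDegree (sliceAt c f) ≤ totalDegree f := by
  rw [sliceAt_apply, Polynomial.eval_eq_sum_range]
  refine (totalDegree_finsetSum _ _).trans (Finset.sup_le fun i _ => ?_)
  by_cases h : (finSuccEquiv R n f).coeff i = 0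
  · simp [h]
  calc totalDegree ((finSuccEquiv R n f).coeff i * C c ^ i)
      ≤ totalDegree ((finSuccEquiv R n f).coeff i) + i := by
        grw [totalDegree_mul, ← map_pow, totalDegree_C, add_zero]; omega
    _ ≤ totalDegree f := totalDegree_coeff_finSuccEquiv_add_le f i h

theorem X_zero_sub_C_dvd_of_sliceAt_eq_zero [IsDomain R] {c : R}
    {f : MvPolynomial (Fin (n + 1)) R} (h : sliceAt c f = 0) : X 0 - C c ∣ f := by
  obtain ⟨g, hg⟩ := Polynomial.dvd_iff_isRoot.2 h
  refine ⟨(finSuccEquiv R n).symm g, (finSuccEquiv R n).injective ?_⟩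
  rw [map_mul, AlgEquiv.apply_symm_apply, finSuccEquiv_X_zero_sub_C]
  exact hg

theorem sliceAt_mem_restrictDegree {d : ℕ} (c : R)
    {f : MvPolynomial (Fin (n + 1)) R} (hf : f ∈ restrictDegree (Fin (n + 1)) R d) :
    sliceAt c f ∈ restrictDegree (Fin n) R d := by
  rw [mem_restrictDegree_iff_degreeOf_le] at hf ⊢
  exact fun j => (degreeOf_sliceAt_le c f j).trans (hf j.succ)

end Slice

section VanishingSlices

variable {R : Type*} [CommRing R] [IsDomain R] {n : ℕ}

theorem degreeOf_X_zero_sub_C (c : R) :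
    degreeOf 0 (X 0 - C c : MvPolynomial (Fin (n + 1)) R) = 1 := by
  rw [← natDegree_finSuccEquiv, finSuccEquiv_X_zero_sub_C, Polynomial.natDegree_X_sub_C]

theorem prod_X_zero_sub_C_dvd_of_sliceAt_eq_zero {S : Finset R}
    {f : MvPolynomial (Fin (n + 1)) R} (hS : ∀ c ∈ S, sliceAt c f = 0) :
    ∏ c ∈ S, (X 0 - C c) ∣ f := by
  classical
  induction S using Finset.induction_on with
  | empty => simp
  | insert c S hc ih =>
    obtain ⟨g, rfl⟩ := ih fun c' hc' => hS c' (Finset.mem_insert_of_mem hc')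
    have hslice := hS c (Finset.mem_insert_self c S)
    rw [map_mul, map_prod, Finset.prod_congr rfl fun c' _ => sliceAt_X_zero_sub_C c c'] at hslice
    have hg : sliceAt c g = 0 := (mul_eq_zero.1 hslice).resolve_left <| by
      simpa [Finset.prod_eq_zero_iff, sub_eq_zero] using hc
    rw [Finset.prod_insert hc, mul_comm (X 0 - C c)]
    exact mul_dvd_mul_left _ (X_zero_sub_C_dvd_of_sliceAt_eq_zero hg)

variable {S : Finset R} {f : MvPolynomial (Fin (n + 1)) R}

theorem degreeOf_zero_prod_X_zero_sub_C :
    degreeOf 0 (∏ c ∈ S, (X 0 - C c) : MvPolynomial (Fin (n + 1)) R) = S.card := by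
  have hp : ∀ c ∈ S, (X 0 - C c : MvPolynomial (Fin (n + 1)) R) ≠ 0 := fun c _ h => by
    simpa [h] using degreeOf_X_zero_sub_C (n := n) c
  simp [degreeOf_prod_eq _ _ hp, degreeOf_X_zero_sub_C]

theorem card_le_degreeOf_zero_of_sliceAt_eq_zero (hf : f ≠ 0)
    (hS : ∀ c ∈ S, sliceAt c f = 0) :
    S.card ≤ degreeOf 0 f := by
  obtain ⟨g, rfl⟩ := prod_X_zero_sub_C_dvd_of_sliceAt_eq_zero hS
  rw [degreeOf_mul_eq (left_ne_zero_of_mul hf) (right_ne_zero_of_mul hf),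
    degreeOf_zero_prod_X_zero_sub_C]
  omega

theorem totalDegree_sliceAt_add_card_le (hf : f ≠ 0) (hS : ∀ c ∈ S, sliceAt c f = 0) (c : R) :
    totalDegree (sliceAt c f) + S.card ≤ totalDegree f := by
  obtain ⟨g, rfl⟩ := prod_X_zero_sub_C_dvd_of_sliceAt_eq_zero hS
  set p : MvPolynomial (Fin (n + 1)) R := ∏ c' ∈ S, (X 0 - C c')
  have hslice : sliceAt c p = C (∏ c' ∈ S, (c - c')) := by
    simp [p, map_prod, sliceAt_X_zero_sub_C]
  calc totalDegree (sliceAt c (p * g)) + S.card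
      ≤ totalDegree (sliceAt c g) + degreeOf 0 p := by
        grw [map_mul, hslice, totalDegree_mul, totalDegree_C, degreeOf_zero_prod_X_zero_sub_C,
          zero_add]
    _ ≤ totalDegree g + totalDegree p := by
        grw [totalDegree_sliceAt_le, degreeOf_le_totalDegree]
    _ = totalDegree (p * g) := by
        rw [totalDegree_mul_of_isDomain (left_ne_zero_of_mul hf) (right_ne_zero_of_mul hf),
          add_comm]

end VanishingSlices

section NonzeroCount

variable {F : Type*} [Field F] [Fintype F]

noncomputable def nonzeroCount {m : ℕ} (f : MvPolynomial (Fin m) F) : ℕ :=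
  Nat.card {x : Fin m → F // eval x f ≠ 0}

theorem nonzeroCount_eq_sum_sliceAt {n : ℕ} (f : MvPolynomial (Fin (n + 1)) F) :
    nonzeroCount f = ∑ c : F, nonzeroCount (sliceAt c f) := by
  let e : {x : Fin (n + 1) → F // eval x f ≠ 0} ≃
      Σ c : F, {s : Fin n → F // eval s (sliceAt c f) ≠ 0} :=
    ((Fin.consEquiv fun _ => F).symm.subtypeEquiv fun x => by
        simp [Fin.consEquiv, eval_sliceAt, Fin.cons_self_tail]).trans
      (Equiv.subtypeProdEquivSigmaSubtype fun c s => eval s (sliceAt c f) ≠ 0)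
  simp only [nonzeroCount, Nat.card_congr e, Nat.card_sigma]

theorem card_sub_mul_le_nonzeroCount {n : ℕ} (f : MvPolynomial (Fin (n + 1)) F) (S : Finset F)
    {B : ℕ} (hB : ∀ c ∉ S, B ≤ nonzeroCount (sliceAt c f)) :
    (Fintype.card F - S.card) * B ≤ nonzeroCount f := by
  classical
  calc (Fintype.card F - S.card) * B = (Finset.univ \ S).card • B := by
        rw [Finset.card_univ_sdiff, smul_eq_mul]
    _ ≤ ∑ c ∈ Finset.univ \ S, nonzeroCount (sliceAt c f) :=
        Finset.card_nsmul_le_sum _ _ _ fun c hc => hB c (Finset.mem_sdiff.1 hc).2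
    _ ≤ nonzeroCount f := by
        rw [nonzeroCount_eq_sum_sliceAt]; exact Finset.sum_le_sum_of_subset Finset.sdiff_subset

open scoped Classical in
noncomputable def vanishingSlices {n : ℕ} (f : MvPolynomial (Fin (n + 1)) F) : Finset F :=
  {c | sliceAt c f = 0}

theorem mem_vanishingSlices {n : ℕ} {f : MvPolynomial (Fin (n + 1)) F} {c : F} :
    c ∈ vanishingSlices f ↔ sliceAt c f = 0 := by
  simp [vanishingSlices]

theorem card_vanishingSlices_le {n : ℕ} {f : MvPolynomial (Fin (n + 1)) F} (hf : f ≠ 0)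
    (hred : f ∈ restrictDegree (Fin (n + 1)) F (Fintype.card F - 1)) :
    (vanishingSlices f).card ≤ Fintype.card F - 1 :=
  (card_le_degreeOf_zero_of_sliceAt_eq_zero hf fun _ => mem_vanishingSlices.1).trans
    ((mem_restrictDegree_iff_degreeOf_le f _).1 hred 0)

theorem nonzeroCount_pos {m : ℕ} {f : MvPolynomial (Fin m) F} (hf : f ≠ 0)
    (hred : f ∈ restrictDegree (Fin m) F (Fintype.card F - 1)) : 0 < nonzeroCount f := by
  induction m with
  | zero =>
    obtain ⟨a, rfl⟩ : ∃ a, f = C a := ⟨_, eq_C_of_isEmpty f⟩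
    exact Nat.card_pos_iff.2 ⟨⟨⟨isEmptyElim, by simpa using hf⟩⟩, inferInstance⟩
  | succ n ih =>
    have hcard := card_vanishingSlices_le hf hred
    have : 1 ≤ Fintype.card F - (vanishingSlices f).card := by
      have := Fintype.one_lt_card (α := F); omega
    refine lt_of_lt_of_le (by omega) (card_sub_mul_le_nonzeroCount f (vanishingSlices f) (B := 1)
      fun c hc => ih (fun h => hc (mem_vanishingSlices.2 h))
        (sliceAt_mem_restrictDegree c hred))

theorem card_sub_mul_pow_le_nonzeroCount {m : ℕ} {f : MvPolynomial (Fin m) F} (hf : f ≠ 0)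
    (hred : f ∈ restrictDegree (Fin m) F (Fintype.card F - 1)) {a b k : ℕ}
    (hb : b + 1 < Fintype.card F) (hdeg : totalDegree f ≤ a * (Fintype.card F - 1) + b)
    (hm : m = a + 1 + k) :
    (Fintype.card F - b) * Fintype.card F ^ k ≤ nonzeroCount f := by
  induction m generalizing a b k with
  | zero => omega
  | succ n ih =>
    set q := Fintype.card F
    set S := vanishingSlices f
    have ht : S.card ≤ q - 1 := card_vanishingSlices_le hf hred
    have hslice_ne : ∀ c ∉ S, sliceAt c f ≠ 0 := fun _ hc h => hc (mem_vanishingSlices.2 h)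
    have hslice_red : ∀ c, sliceAt c f ∈ restrictDegree (Fin n) F (q - 1) := fun c =>
      sliceAt_mem_restrictDegree c hred
    have hslice_deg : ∀ c, totalDegree (sliceAt c f) + S.card ≤ a * (q - 1) + b := fun c =>
      (totalDegree_sliceAt_add_card_le hf (fun _ => mem_vanishingSlices.1) c).trans hdeg
    -- With `t` vanishing slices, the others have degree at most `a (q - 1) + (b - t)` if `t ≤ b`,
    -- and at most `(a - 1) (q - 1) + (q - 1 + b - t)` otherwise.
    rcases le_or_gt S.card b with htb | hbt
    · rcases k with _ | k
      · calc (q - b) * q ^ 0 ≤ (q - S.card) * 1 := by rw [pow_zero]; omega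
          _ ≤ nonzeroCount f := card_sub_mul_le_nonzeroCount f S fun c hc =>
              nonzeroCount_pos (hslice_ne c hc) (hslice_red c)
      · calc (q - b) * q ^ (k + 1) ≤ (q - S.card) * ((q - (b - S.card)) * q ^ k) := by
              rw [pow_succ', ← mul_assoc, ← mul_assoc]
              exact Nat.mul_le_mul_right _ (Nat.sub_mul_le_sub_mul_sub_sub htb (by omega))
          _ ≤ nonzeroCount f := card_sub_mul_le_nonzeroCount f S fun c hc =>
              ih (hslice_ne c hc) (hslice_red c) (a := a) (by omega)
                (by have := hslice_deg c; omega) (by omega)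
    · rcases a with _ | a
      · have := hslice_deg 0; omega
      calc (q - b) * q ^ k ≤ (q - S.card) * ((q - (q - 1 + b - S.card)) * q ^ k) := by
            rw [← mul_assoc, show q - (q - 1 + b - S.card) = S.card - b + 1 by omega]
            exact Nat.mul_le_mul_right _ (Nat.sub_le_sub_mul_sub_add_one hbt.le (by omega))
        _ ≤ nonzeroCount f := card_sub_mul_le_nonzeroCount f S fun c hc =>
            ih (hslice_ne c hc) (hslice_red c) (a := a) (by omega)
              (by have := hslice_deg c; rw [add_one_mul] at this; omega) (by omega)

end NonzeroCount

section Reduction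

variable {F σ : Type*} [Field F] [Fintype F]

/-- Since `x ^ q = x` on `𝔽_q`, a positive exponent may be lowered by multiples of `q - 1`;
this picks the representative in `[1, q - 1]` (and keeps `0` fixed, as `0 ^ 0 = 1`). -/
def reduceExp (q e : ℕ) : ℕ := if e = 0 then 0 else (e - 1) % (q - 1) + 1

theorem reduceExp_zero (q : ℕ) : reduceExp q 0 = 0 := rfl

theorem reduceExp_le_self (q e : ℕ) : reduceExp q e ≤ e := by
  unfold reduceExp
  split_ifs with he
  · omega
  · have := Nat.mod_le (e - 1) (q - 1); omega

theorem reduceExp_le {q : ℕ} (hq : 1 < q) (e : ℕ) : reduceExp q e ≤ q - 1 := by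
  unfold reduceExp
  split_ifs with he
  · exact Nat.zero_le _
  · have := Nat.mod_lt (e - 1) (show 0 < q - 1 by omega); omega

theorem pow_reduceExp (x : F) (e : ℕ) : x ^ reduceExp (Fintype.card F) e = x ^ e := by
  unfold reduceExp
  split_ifs with he
  · rw [he]
  rcases eq_or_ne x 0 with rfl | hx
  · rw [zero_pow he, zero_pow (Nat.succ_ne_zero _)]
  · calc x ^ ((e - 1) % (Fintype.card F - 1) + 1)
        = x ^ ((e - 1) % (Fintype.card F - 1) + 1) *
            (x ^ (Fintype.card F - 1)) ^ ((e - 1) / (Fintype.card F - 1)) := by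
          rw [FiniteField.pow_card_sub_one_eq_one x hx, one_pow, mul_one]
      _ = x ^ e := by
          rw [← pow_mul, ← pow_add]
          have := Nat.mod_add_div (e - 1) (Fintype.card F - 1)
          congr 1; omega

noncomputable def reduceDegree (f : MvPolynomial σ F) : MvPolynomial σ F :=
  ∑ s ∈ f.support,
    monomial (s.mapRange (reduceExp (Fintype.card F)) (reduceExp_zero _)) (coeff s f)

theorem eval_reduceDegree (x : σ → F) (f : MvPolynomial σ F) :
    eval x (reduceDegree f) = eval x f := by
  conv_rhs => rw [← support_sum_monomial_coeff f]
  simp only [reduceDegree, map_sum, eval_monomial]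
  refine Finset.sum_congr rfl fun s _ => congrArg _ ?_
  rw [Finsupp.prod_mapRange_index fun _ => pow_zero _]
  exact Finsupp.prod_congr fun j _ => pow_reduceExp (x j) (s j)

theorem reduceDegree_mem_restrictDegree (f : MvPolynomial σ F) :
    reduceDegree f ∈ restrictDegree σ F (Fintype.card F - 1) := by
  classical
  rw [mem_restrictDegree_iff_degreeOf_le]
  intro j
  refine (degreeOf_sum_le _ _ _).trans (Finset.sup_le fun s _ => ?_)
  rcases eq_or_ne (coeff s f) 0 with h | h
  · simp [h]
  · rw [degreeOf_monomial_eq _ _ h, Finsupp.mapRange_apply]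
    exact reduceExp_le Fintype.one_lt_card _

theorem totalDegree_reduceDegree_le (f : MvPolynomial σ F) :
    totalDegree (reduceDegree f) ≤ totalDegree f := by
  refine (totalDegree_finsetSum _ _).trans (Finset.sup_le fun s hs => ?_)
  refine (totalDegree_monomial_le _ _).trans (le_trans ?_ (le_totalDegree hs))
  rw [Finsupp.sum_mapRange_index fun _ => rfl]
  exact Finsupp.sum_le_sum fun j _ => reduceExp_le_self _ _

end Reduction

theorem card_pow_sub_le_nonzeroCount {F : Type*} [Field F] [Fintype F] {m a : ℕ}
    {f : MvPolynomial (Fin m) F} (hf : ∃ x, eval x f ≠ 0)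
    (hdeg : totalDegree f ≤ a * (Fintype.card F - 1)) :
    Fintype.card F ^ (m - a) ≤ nonzeroCount f := by
  have hcount : nonzeroCount (reduceDegree f) = nonzeroCount f := by
    simp only [nonzeroCount, eval_reduceDegree]
  have hne : reduceDegree f ≠ 0 := fun h => by
    obtain ⟨x, hx⟩ := hf
    simp [← eval_reduceDegree x f, h] at hx
  rw [← hcount]
  rcases le_or_gt m a with hma | ham
  · rw [Nat.sub_eq_zero_of_le hma, pow_zero]
    exact nonzeroCount_pos hne (reduceDegree_mem_restrictDegree f)
  · have := card_sub_mul_pow_le_nonzeroCount hne (reduceDegree_mem_restrictDegree f) (b := 0)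
      Fintype.one_lt_card ((totalDegree_reduceDegree_le f).trans hdeg) (k := m - a - 1) (by omega)
    rwa [Nat.sub_zero, ← pow_succ', show m - a - 1 + 1 = m - a by omega] at this

theorem eval_prod_one_sub_pow_card_sub_one_ne_zero_iff {F σ ι : Type*} [Field F] [Fintype F]
    [Fintype ι] (P : ι → MvPolynomial σ F) (x : σ → F) :
    eval x (∏ i, (1 - P i ^ (Fintype.card F - 1))) ≠ 0 ↔ ∀ i, eval x (P i) = 0 := by
  simp only [map_prod, map_sub, map_one, map_pow, ne_eq, Finset.prod_eq_zero_iff,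
    Finset.mem_univ, true_and, not_exists, sub_eq_zero]
  refine forall_congr' fun i => ⟨fun h => ?_, fun h => ?_⟩
  · by_contra hx
    exact h (FiniteField.pow_card_sub_one_eq_one _ hx).symm
  · rw [h, zero_pow (Nat.sub_ne_zero_of_lt Fintype.one_lt_card)]
    exact one_ne_zero

theorem totalDegree_prod_one_sub_pow_le {R σ ι : Type*} [CommRing R] (s : Finset ι)
    (P : ι → MvPolynomial σ R) (e : ℕ) :
    totalDegree (∏ i ∈ s, (1 - P i ^ e)) ≤ (∑ i ∈ s, totalDegree (P i)) * e := by
  refine (totalDegree_finsetProd _ _).trans ?_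
  rw [Finset.sum_mul]
  refine Finset.sum_le_sum fun i _ => (totalDegree_sub _ _).trans ?_
  rw [totalDegree_one, zero_max, mul_comm]
  exact totalDegree_pow _ _

theorem IsHomogeneous.eval_zero {R σ : Type*} [CommRing R] {p : MvPolynomial σ R} {n : ℕ}
    (hp : p.IsHomogeneous n) (hn : n ≠ 0) : eval 0 p = 0 := by
  rw [MvPolynomial.eval_zero, constantCoeff_eq]
  exact hp.coeff_eq_zero (by simpa using hn.symm)

end MvPolynomial

open MvPolynomial

theorem warning_system_general {F : Type*} [Field F] [Fintype F]
    (r m : ℕ) (d : Fin r → ℕ) (hd : ∀ i, 0 < d i)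
    (P : Fin r → MvPolynomial (Fin m) F)
    (hP : ∀ i, (P i).IsHomogeneous (d i)) :
    Nat.card {x : Fin m → F // ∀ i, eval x (P i) = 0} ≥
      Fintype.card F ^ (m - ∑ i, d i) := by
  let f : MvPolynomial (Fin m) F := ∏ i, (1 - P i ^ (Fintype.card F - 1))
  have hzeros := eval_prod_one_sub_pow_card_sub_one_ne_zero_iff P
  have htrivial : eval 0 f ≠ 0 :=
    (hzeros 0).2 fun i => (hP i).eval_zero (hd i).ne'
  have hdeg : totalDegree f ≤ (∑ i, d i) * (Fintype.card F - 1) :=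
    (totalDegree_prod_one_sub_pow_le _ P _).trans <| by
      gcongr with i; exact (hP i).totalDegree_le
  calc Fintype.card F ^ (m - ∑ i, d i) ≤ nonzeroCount f :=
        card_pow_sub_le_nonzeroCount ⟨0, htrivial⟩ hdeg
    _ = Nat.card {x : Fin m → F // ∀ i, eval x (P i) = 0} :=
        Nat.card_congr (Equiv.subtypeEquivRight hzeros)

/-- Warning's theorem: a system of forms of degrees `d i` in `m > ∑ d i` variables
over a finite field has at least `q ^ (m - ∑ d i)` common affine zeros. -/
theorem warning_system {F : Type*} [Field F] [Fintype F]
    (r m : ℕ) (d : Fin r → ℕ) (hd : ∀ i, 0 < d i)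
    (P : Fin r → MvPolynomial (Fin m) F)
    (hP : ∀ i, (P i).IsHomogeneous (d i))
    (hm : m > ∑ i, d i) :
    Nat.card {x : Fin m → F // ∀ i, eval x (P i) = 0} ≥
      Fintype.card F ^ (m - ∑ i, d i) :=
  warning_system_general r m d hd P hP
end

section
/- Let A₁,…,A_l and B₁,…,B_m be linear forms with integer coefficients in x = (x₁,…,x_n). Let x₁,x₂,… be a sequence of integer vectors with A_i(x_k) ≥ 0 for all i and k. Then there exists a subsequence y₁,y₂,…, a constant B, and an integer vector a with A_i(a) ≥ 0 for all i, such that B_j(y_k) → +∞ for every j with B_j(a) > 0, and B_j(y_k) ≤ B for every j with B_j(a) ≤ 0. -/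
open Filter

/-- A sequence unbounded above has a subsequence tending to `atTop`. -/
lemma aux_subseq_atTop (u : ℕ → ℤ) (h : ¬ BddAbove (Set.range u)) :
    ∃ ψ : ℕ → ℕ, StrictMono ψ ∧ Tendsto (fun k => u (ψ k)) atTop atTop := by
  have hfreq : ∀ n : ℕ, ∃ᶠ k in atTop, (n : ℤ) ≤ u k := by
    intro n
    rw [frequently_atTop]
    intro K
    set M : ℤ := (n : ℤ) ⊔ (((Finset.range K).sup fun k => (u k).toNat : ℕ) : ℤ) with hM
    obtain ⟨y, ⟨k, rfl⟩, hy⟩ := (not_bddAbove_iff).1 h M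
    refine ⟨k, ?_, le_trans (le_sup_left.trans hy.le) le_rfl⟩
    by_contra hk
    push_neg at hk
    have h1 : u k ≤ ((u k).toNat : ℤ) := Int.self_le_toNat _
    have h2 : ((u k).toNat : ℕ) ≤ (Finset.range K).sup fun k => (u k).toNat :=
      Finset.le_sup (f := fun k => (u k).toNat) (Finset.mem_range.2 hk)
    have : u k ≤ M := le_trans h1 (le_trans (by exact_mod_cast h2) le_sup_right)
    omega
  obtain ⟨ψ, hψ, hP⟩ := extraction_forall_of_frequently hfreq
  exact ⟨ψ, hψ, tendsto_atTop_mono hP tendsto_natCast_atTop_atTop⟩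

/-- Trichotomy: every integer sequence has a subsequence which tends to `atTop`,
tends to `atBot`, or is constant. -/
lemma aux_trichotomy (u : ℕ → ℤ) :
    ∃ ψ : ℕ → ℕ, StrictMono ψ ∧
      (Tendsto (fun k => u (ψ k)) atTop atTop ∨ Tendsto (fun k => u (ψ k)) atTop atBot ∨
        ∃ c, ∀ k, u (ψ k) = c) := by
  by_cases hA : BddAbove (Set.range u)
  · by_cases hB : BddBelow (Set.range u)
    · -- bounded: constant subsequence
      obtain ⟨b, hb⟩ := hA
      obtain ⟨a, ha⟩ := hB
      have hmem : ∀ k, u k ∈ Set.Icc a b := fun k =>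
        ⟨ha (Set.mem_range_self k), hb (Set.mem_range_self k)⟩
      have hfin : Finite (Set.Icc a b) := (Set.finite_Icc a b).to_subtype
      let v : ℕ → Set.Icc a b := fun k => ⟨u k, hmem k⟩
      obtain ⟨c, hc⟩ := Finite.exists_infinite_fiber v
      have hfr : ∃ᶠ k in atTop, u k = (c : ℤ) := by
        rw [Nat.frequently_atTop_iff_infinite]
        have : (v ⁻¹' {c}).Infinite := Set.infinite_coe_iff.1 hc
        refine this.mono ?_ |>.mono fun k hk => hk
        intro k hk
        simpa [v, Subtype.ext_iff] using hk
      obtain ⟨ψ, hψ, hP⟩ := extraction_of_frequently_atTop hfr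
      exact ⟨ψ, hψ, Or.inr (Or.inr ⟨c, hP⟩)⟩
    · -- unbounded below
      have h' : ¬ BddAbove (Set.range fun k => -u k) := by
        intro ⟨b, hb⟩
        refine hB ⟨-b, ?_⟩
        rintro y ⟨k, rfl⟩
        have := hb (Set.mem_range_self (f := fun k => -u k) k)
        omega
      obtain ⟨ψ, hψ, ht⟩ := aux_subseq_atTop _ h'
      refine ⟨ψ, hψ, Or.inr (Or.inl ?_)⟩
      exact tendsto_neg_atTop_iff.1 ht
  · obtain ⟨ψ, hψ, ht⟩ := aux_subseq_atTop u hA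
    exact ⟨ψ, hψ, Or.inl ht⟩

/-- The trichotomy property is preserved by passing to a further subsequence. -/
lemma aux_tri_comp (u : ℕ → ℤ) (ψ : ℕ → ℕ) (hψ : StrictMono ψ)
    (h : Tendsto u atTop atTop ∨ Tendsto u atTop atBot ∨ ∃ c, ∀ k, u k = c) :
    Tendsto (fun k => u (ψ k)) atTop atTop ∨ Tendsto (fun k => u (ψ k)) atTop atBot ∨
      ∃ c, ∀ k, u (ψ k) = c := by
  rcases h with h | h | ⟨c, hc⟩
  · exact Or.inl (h.comp hψ.tendsto_atTop)
  · exact Or.inr (Or.inl (h.comp hψ.tendsto_atTop))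
  · exact Or.inr (Or.inr ⟨c, fun k => hc _⟩)

/-- Simultaneous trichotomy for finitely many sequences. -/
lemma aux_trichotomy_family (N : ℕ) (u : Fin N → ℕ → ℤ) :
    ∃ ψ : ℕ → ℕ, StrictMono ψ ∧ ∀ i,
      (Tendsto (fun k => u i (ψ k)) atTop atTop ∨ Tendsto (fun k => u i (ψ k)) atTop atBot ∨
        ∃ c, ∀ k, u i (ψ k) = c) := by
  induction N with
  | zero => exact ⟨id, strictMono_id, fun i => i.elim0⟩
  | succ N ih =>
    obtain ⟨ψ₁, hψ₁, h₁⟩ := ih (fun i => u i.succ)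
    obtain ⟨ψ₂, hψ₂, h₂⟩ := aux_trichotomy (fun k => u 0 (ψ₁ k))
    refine ⟨ψ₁ ∘ ψ₂, hψ₁.comp hψ₂, fun i => ?_⟩
    rcases Fin.eq_zero_or_eq_succ i with rfl | ⟨j, rfl⟩
    · exact h₂
    · exact aux_tri_comp _ ψ₂ hψ₂ (h₁ j)

/-- A sequence tending to `atBot` is bounded above. -/
lemma aux_bdd_of_atBot (u : ℕ → ℤ) (h : Tendsto u atTop atBot) :
    ∃ C, ∀ k, u k ≤ C := by
  obtain ⟨N, hN⟩ := (h.eventually (eventually_le_atBot (u 0))).exists_forall_of_atTop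
  refine ⟨u 0 ⊔ (((Finset.range N).sup fun k => (u k).toNat : ℕ) : ℤ), fun k => ?_⟩
  rcases lt_or_ge k N with hk | hk
  · have h1 : u k ≤ ((u k).toNat : ℤ) := Int.self_le_toNat _
    have h2 : ((u k).toNat : ℕ) ≤ (Finset.range N).sup fun k => (u k).toNat :=
      Finset.le_sup (f := fun k => (u k).toNat) (Finset.mem_range.2 hk)
    exact le_trans h1 (le_trans (by exact_mod_cast h2) le_sup_right)
  · exact le_trans (hN k hk) le_sup_left

/-- Schmidt's Lemma 8: given integer linear forms `A i`, `B j` and a sequence of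
integer vectors on which all `A i` are nonnegative, one can pass to a subsequence
and find an integer vector `a` with `A i a ≥ 0`, such that `B j` tends to `+∞`
along the subsequence whenever `B j a > 0`, and is bounded whenever `B j a ≤ 0`. -/
theorem schmidt_lemma8 (n l m : ℕ)
    (A : Fin l → (Fin n → ℤ) →ₗ[ℤ] ℤ) (B : Fin m → (Fin n → ℤ) →ₗ[ℤ] ℤ)
    (x : ℕ → Fin n → ℤ) (hx : ∀ i k, 0 ≤ A i (x k)) :
    ∃ φ : ℕ → ℕ, StrictMono φ ∧ ∃ C : ℤ, ∃ a : Fin n → ℤ,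
      (∀ i, 0 ≤ A i a) ∧
      (∀ j, 0 < B j a → Tendsto (fun k => B j (x (φ k))) atTop atTop) ∧
      (∀ j, B j a ≤ 0 → ∀ k, B j (x (φ k)) ≤ C) := by
  -- extract a subsequence along which every `A i` and every `B j` is
  -- `atTop`, `atBot`, or constant
  obtain ⟨φ₁, hφ₁, hA₁⟩ := aux_trichotomy_family l (fun i k => A i (x k))
  obtain ⟨φ₂, hφ₂, hB₂⟩ := aux_trichotomy_family m (fun j k => B j (x (φ₁ k)))
  set φ : ℕ → ℕ := φ₁ ∘ φ₂ with hφdef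
  have hφ : StrictMono φ := hφ₁.comp hφ₂
  set y : ℕ → Fin n → ℤ := fun k => x (φ k) with hy
  have hA' : ∀ i, Tendsto (fun k => A i (y k)) atTop atTop ∨
      Tendsto (fun k => A i (y k)) atTop atBot ∨ ∃ c, ∀ k, A i (y k) = c :=
    fun i => aux_tri_comp _ φ₂ hφ₂ (hA₁ i)
  have hB' : ∀ j, Tendsto (fun k => B j (y k)) atTop atTop ∨
      Tendsto (fun k => B j (y k)) atTop atBot ∨ ∃ c, ∀ k, B j (y k) = c := hB₂
  -- no `A i` can tend to `atBot`
  have hAnb : ∀ i, ¬ Tendsto (fun k => A i (y k)) atTop atBot := by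
    intro i hi
    obtain ⟨k, hk⟩ := (hi.eventually (eventually_le_atBot (-1))).exists
    have h2 := hx i (φ k)
    have h3 : A i (y k) = A i (x (φ k)) := rfl
    omega
  -- eventual inequalities for choosing K
  have hAK : ∀ i, ∀ᶠ K in atTop, A i (y 0) ≤ A i (y K) := by
    intro i
    rcases hA' i with h | h | ⟨c, hc⟩
    · exact h.eventually (eventually_ge_atTop _)
    · exact absurd h (hAnb i)
    · exact Eventually.of_forall fun K => by rw [hc, hc]
  have hBK : ∀ j, ∀ᶠ K in atTop,
      (B j (y 0) < B j (y K) → Tendsto (fun k => B j (y k)) atTop atTop) ∧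
      (B j (y K) ≤ B j (y 0) → ∃ Cj, ∀ k, B j (y k) ≤ Cj) := by
    intro j
    rcases hB' j with h | h | ⟨c, hc⟩
    · filter_upwards [h.eventually (eventually_gt_atTop (B j (y 0)))] with K hK
      exact ⟨fun _ => h, fun h2 => absurd h2 hK.not_ge⟩
    · filter_upwards [h.eventually (eventually_le_atBot (B j (y 0)))] with K hK
      exact ⟨fun h1 => absurd hK h1.not_ge, fun _ => aux_bdd_of_atBot _ h⟩
    · refine Eventually.of_forall fun K => ?_
      rw [hc, hc]
      exact ⟨fun h1 => absurd h1 (lt_irrefl c), fun _ => ⟨c, fun k => (hc k).le⟩⟩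
  obtain ⟨K, hKA, hKB⟩ := ((eventually_all.2 hAK).and (eventually_all.2 hBK)).exists
  -- the vector a
  set a : Fin n → ℤ := fun t => y K t - y 0 t with ha
  have hAa : ∀ i, A i a = A i (y K) - A i (y 0) := fun i => by
    have : a = y K - y 0 := rfl
    rw [this, map_sub]
  have hBa : ∀ j, B j a = B j (y K) - B j (y 0) := fun j => by
    have : a = y K - y 0 := rfl
    rw [this, map_sub]
  have hbd : ∀ j, ∃ Cj, B j a ≤ 0 → ∀ k, B j (y k) ≤ Cj := by
    intro j
    by_cases hj : B j a ≤ 0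
    · have : B j (y K) ≤ B j (y 0) := by have := hBa j; omega
      obtain ⟨Cj, hCj⟩ := (hKB j).2 this
      exact ⟨Cj, fun _ => hCj⟩
    · exact ⟨0, fun h => absurd h hj⟩
  choose Cf hCf using hbd
  refine ⟨φ, hφ, ((Finset.univ.sup fun j => (Cf j).toNat : ℕ) : ℤ), a, ?_, ?_, ?_⟩
  · intro i
    have := hKA i
    have := hAa i
    omega
  · intro j hj
    have : B j (y 0) < B j (y K) := by have := hBa j; omega
    exact (hKB j).1 this
  · intro j hj k
    have h1 : B j (y k) ≤ Cf j := hCf j hj k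
    have h2 : Cf j ≤ ((Cf j).toNat : ℤ) := Int.self_le_toNat _
    have h3 : ((Cf j).toNat : ℕ) ≤ Finset.univ.sup fun j => (Cf j).toNat :=
      Finset.le_sup (f := fun j => (Cf j).toNat) (Finset.mem_univ j)
    calc B j (y k) ≤ Cf j := h1
      _ ≤ _ := le_trans h2 (by exact_mod_cast h3)
end

section
/- Let F(x₁,…,x_m) be a cubic form over a finite field 𝔽_q that is non-degenerate (i.e., involves all m variables explicitly in every equivalent form under invertible linear change of variables), with m ≥ 4. Then F has a non-singular zero in 𝔽_q^m. -/
open MvPolynomial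



theorem pderiv_aeval_sum' {m : ℕ} {F R : Type*} [CommSemiring F] [CommRing R] [Algebra F R]
    (g : Fin m → MvPolynomial (Fin 2) R) (P : MvPolynomial (Fin m) F) (j : Fin 2) :
    pderiv j (aeval g P) = ∑ i, aeval g (pderiv i P) * pderiv j (g i) := by
  classical
  induction P using MvPolynomial.induction_on with
  | C c => simp [IsScalarTower.algebraMap_apply F R (MvPolynomial (Fin 2) R)]
  | add p q hp hq => simp only [map_add, hp, hq, add_mul, Finset.sum_add_distrib]
  | mul_X p i hp =>
      simp only [map_mul, aeval_X, pderiv_mul, hp, pderiv_X, Pi.single_apply,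
        map_add, apply_ite (aeval g), map_one, map_zero, mul_ite, mul_one, mul_zero,
        ite_mul, zero_mul, add_mul, Finset.sum_add_distrib, Finset.sum_ite_eq,
        Finset.mem_univ, if_true, Finset.sum_mul]
      congr 1
      exact Finset.sum_congr rfl fun x _ => by ring

theorem finsupp_degree_eq_sum_univ {σ : Type*} [Fintype σ] (d : σ →₀ ℕ) :
    d.degree = ∑ i, d i :=
  Finset.sum_subset (Finset.subset_univ _)
    (fun x _ hx => Finsupp.notMem_support_iff.mp hx)

theorem isHomogeneous_pderiv' {m : ℕ} {R : Type*} [CommRing R]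
    {P : MvPolynomial (Fin m) R} {n : ℕ}
    (h : P.IsHomogeneous n) (i : Fin m) : (pderiv i P).IsHomogeneous (n - 1) := by
  classical
  rw [P.as_sum, map_sum]
  apply IsHomogeneous.sum
  intro d hd
  rw [pderiv_monomial]
  by_cases hdi : d i = 0
  · simp only [hdi, Nat.cast_zero, mul_zero, monomial_zero]
    exact isHomogeneous_zero _ _ _
  · apply isHomogeneous_monomial
    have hdeg : d.degree = n := by
      rw [Finsupp.degree_eq_weight_one]; exact h (mem_support_iff.mp hd)
    rw [finsupp_degree_eq_sum_univ] at hdeg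
    rw [finsupp_degree_eq_sum_univ]
    rw [← Finset.add_sum_erase _ _ (Finset.mem_univ i)] at hdeg ⊢
    have h1 : ∀ j ∈ Finset.univ.erase i, ((d - Finsupp.single i 1 : Fin m →₀ ℕ)) j = d j := by
      intro j hj
      have : j ≠ i := (Finset.mem_erase.mp hj).1
      simp [Finsupp.tsub_apply, Finsupp.single_apply, this.symm]
    rw [Finset.sum_congr rfl h1]
    have h2 : ((d - Finsupp.single i 1 : Fin m →₀ ℕ)) i = d i - 1 := by
      simp [Finsupp.tsub_apply]
    rw [h2, show (Finset.univ.erase i).sum ⇑d = ∑ x ∈ Finset.univ.erase i, d x from rfl]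
    omega

theorem homog3_decomp {R : Type*} [CommRing R] {g : MvPolynomial (Fin 2) R}
    (hg : g.IsHomogeneous 3) :
    g = ∑ k ∈ Finset.range 4,
        monomial (Finsupp.single 0 k + Finsupp.single 1 (3 - k))
          (coeff (Finsupp.single 0 k + Finsupp.single 1 (3 - k)) g) := by
  classical
  ext d
  rw [coeff_sum]
  simp only [coeff_monomial]
  by_cases hd : coeff d g = 0
  · rw [hd]
    symm
    apply Finset.sum_eq_zero
    intro k _
    split_ifs with h
    · rw [h, hd]
    · rfl
  · have hdeg : d 0 + d 1 = 3 := by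
      have h1 : d.degree = 3 := by
        rw [Finsupp.degree_eq_weight_one]; exact hg hd
      rw [finsupp_degree_eq_sum_univ, Fin.sum_univ_two] at h1
      exact h1
    have hded : d = Finsupp.single 0 (d 0) + Finsupp.single 1 (3 - d 0) := by
      ext j
      fin_cases j <;> simp [Finsupp.single_apply] <;> omega
    rw [Finset.sum_eq_single (d 0)]
    · rw [← hded, if_pos rfl]
    · intro k _ hk
      rw [if_neg]
      intro h
      apply hk
      have := congrArg (fun f : Fin 2 →₀ ℕ => f 0) h
      simpa [Finsupp.single_apply] using this
    · intro h
      exact absurd (Finset.mem_range.mpr (by omega)) h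

theorem mono_two_eq {R : Type*} [CommRing R] (a b : ℕ) (c : R) :
    monomial (Finsupp.single (0 : Fin 2) a + Finsupp.single (1 : Fin 2) b) c
      = C c * X 0 ^ a * X 1 ^ b := by
  rw [X_pow_eq_monomial, X_pow_eq_monomial, C_mul_monomial, monomial_mul]
  simp

theorem cubic_key {m : ℕ} {F R : Type*} [Field F] [CommRing R] [Algebra F R]
    {P : MvPolynomial (Fin m) F} (hhom : P.IsHomogeneous 3)
    (α β : Fin m → R) (h0 : aeval α P = 0)
    (hgrad : ∀ i, aeval α (pderiv i P) = 0) (t : R) :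
    aeval (fun i => α i * t + β i) P
        = (∑ i, α i * aeval β (pderiv i P)) * t + aeval β P
      ∧ ∑ i, α i * aeval (fun i' => α i' * t + β i') (pderiv i P)
        = ∑ i, α i * aeval β (pderiv i P) := by
  classical
  set S : Fin m → MvPolynomial (Fin 2) R := fun i => C (α i) * X 0 + C (β i) * X 1 with hS
  have hSh : ∀ i, (S i).IsHomogeneous 1 := fun i =>
    (((isHomogeneous_X R 0).C_mul _)).add (((isHomogeneous_X R 1).C_mul _))
  have hg : (aeval S P).IsHomogeneous 3 := by simpa using hhom.aeval S hSh
  have hcomp : ∀ (v : Fin 2 → R) (p : MvPolynomial (Fin m) F),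
      aeval v (aeval S p) = aeval (fun i => α i * v 0 + β i * v 1) p := by
    intro v p
    have h2 : ((aeval v : MvPolynomial (Fin 2) R →ₐ[R] R).restrictScalars F).comp
        (aeval S : MvPolynomial (Fin m) F →ₐ[F] MvPolynomial (Fin 2) R)
        = aeval (fun i => α i * v 0 + β i * v 1) := by
      rw [comp_aeval]
      congr 1
      funext i
      simp [hS]
    exact congrArg (fun (φ : MvPolynomial (Fin m) F →ₐ[F] R) => φ p) h2
  set c : ℕ → R := fun k =>
    coeff (Finsupp.single 0 k + Finsupp.single 1 (3 - k)) (aeval S P) with hc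
  have hdec : aeval S P = C (c 0) * X 1 ^ 3 + C (c 1) * X 0 * X 1 ^ 2
      + C (c 2) * X 0 ^ 2 * X 1 + C (c 3) * X 0 ^ 3 := by
    calc aeval S P = _ := homog3_decomp hg
    _ = _ := by
      rw [Finset.sum_range_succ, Finset.sum_range_succ, Finset.sum_range_succ,
        Finset.sum_range_succ, Finset.sum_range_zero, zero_add]
      rw [mono_two_eq, mono_two_eq, mono_two_eq, mono_two_eq]
      simp only [show (3:ℕ)-0=3 from rfl, show (3:ℕ)-1=2 from rfl,
        show (3:ℕ)-2=1 from rfl, show (3:ℕ)-3=0 from rfl]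
      ring
  -- partial derivative expressions via chain rule
  have hpd0 : pderiv 0 (aeval S P) = ∑ i, aeval S (pderiv i P) * C (α i) := by
    rw [pderiv_aeval_sum']
    apply Finset.sum_congr rfl
    intro i _
    congr 1
    simp [hS, pderiv_X_of_ne (show (1 : Fin 2) ≠ 0 by decide)]
  have hpd1 : pderiv 1 (aeval S P) = ∑ i, aeval S (pderiv i P) * C (β i) := by
    rw [pderiv_aeval_sum']
    apply Finset.sum_congr rfl
    intro i _
    congr 1
    simp [hS, pderiv_X_of_ne (show (0 : Fin 2) ≠ 1 by decide)]
  -- c 3 = 0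
  have hfun10 : (fun i => α i * (![1, 0] : Fin 2 → R) 0 + β i * (![1, 0] : Fin 2 → R) 1) = α := by
    funext i; simp
  have hfun01 : (fun i => α i * (![0, 1] : Fin 2 → R) 0 + β i * (![0, 1] : Fin 2 → R) 1) = β := by
    funext i; simp
  have hfunt : (fun i => α i * (![t, 1] : Fin 2 → R) 0 + β i * (![t, 1] : Fin 2 → R) 1)
      = fun i => α i * t + β i := by
    funext i; simp
  have hc3 : c 3 = 0 := by
    have h1 : aeval (![1, 0] : Fin 2 → R) (aeval S P) = c 3 := by
      rw [hdec]; simp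
    rw [hcomp, hfun10, h0] at h1
    exact h1.symm
  have hc0 : c 0 = aeval β P := by
    have h1 : aeval (![0, 1] : Fin 2 → R) (aeval S P) = c 0 := by
      rw [hdec]; simp
    rw [hcomp, hfun01] at h1
    exact h1.symm
  have hc2 : c 2 = 0 := by
    have h1 : aeval (![1, 0] : Fin 2 → R) (pderiv 1 (aeval S P)) = c 2 := by
      rw [hdec]
      simp [pderiv_X_of_ne (show (0 : Fin 2) ≠ 1 by decide), pderiv_X_self]
    rw [hpd1, map_sum] at h1
    rw [← h1]
    apply Finset.sum_eq_zero
    intro i _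
    rw [map_mul, hcomp, hfun10, hgrad i, zero_mul]
  have hc1 : c 1 = ∑ i, α i * aeval β (pderiv i P) := by
    have h1 : aeval (![0, 1] : Fin 2 → R) (pderiv 0 (aeval S P)) = c 1 := by
      rw [hdec]
      simp [pderiv_X_of_ne (show (1 : Fin 2) ≠ 0 by decide), pderiv_X_self]
    rw [hpd0, map_sum] at h1
    rw [← h1]
    apply Finset.sum_congr rfl
    intro i _
    rw [map_mul, hcomp, hfun01, aeval_C, Algebra.algebraMap_self]
    simp only [RingHom.id_apply]
    ring_nf
  constructor
  · have h1 : aeval (![t, 1] : Fin 2 → R) (aeval S P)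
        = c 0 + c 1 * t + c 2 * t ^ 2 + c 3 * t ^ 3 := by
      rw [hdec]; simp; try ring
    rw [hcomp, hfunt] at h1
    rw [h1, hc0, hc1, hc2, hc3]
    ring
  · have h1 : aeval (![t, 1] : Fin 2 → R) (pderiv 0 (aeval S P))
        = c 1 + 2 * c 2 * t + 3 * c 3 * t ^ 2 := by
      rw [hdec]
      simp [pderiv_X_of_ne (show (1 : Fin 2) ≠ 0 by decide), pderiv_X_self]
      ring
    rw [hpd0, map_sum] at h1
    have h2 : ∀ i : Fin m, aeval (![t, 1] : Fin 2 → R) (aeval S (pderiv i P) * C (α i))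
        = α i * aeval (fun i' => α i' * t + β i') (pderiv i P) := by
      intro i
      rw [map_mul, hcomp, hfunt, aeval_C, Algebra.algebraMap_self]
      simp only [RingHom.id_apply]
      ring
    rw [Finset.sum_congr rfl (fun i _ => h2 i)] at h1
    rw [h1, hc2, hc3, hc1]
    ring


/-- A non-degenerate cubic form in `m ≥ 4` variables over a finite field (i.e. one
which cannot be written, after any linear change of variables, as a polynomial in
fewer than `m` linear forms) has a non-singular zero. -/
theorem nondegenerate_cubic_has_nonsingular_zero {F : Type*} [Field F] [Fintype F]
    (m : ℕ) (hm : 4 ≤ m) (P : MvPolynomial (Fin m) F) (hhom : P.IsHomogeneous 3)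
    (hnd : ¬ ∃ (k : ℕ) (_ : k < m) (A : Matrix (Fin k) (Fin m) F)
        (G : MvPolynomial (Fin k) F),
        P = MvPolynomial.aeval (fun t => ∑ j, C (A t j) * X j) G) :
    ∃ a : Fin m → F, a ≠ 0 ∧ eval a P = 0 ∧ ∃ i, eval a (pderiv i P) ≠ 0 := by
  classical
  have aeval_eq : ∀ (x : Fin m → F) (p : MvPolynomial (Fin m) F), aeval x p = eval x p := by
    intro x p; rw [aeval_def, Algebra.algebraMap_self]; rfl
  have hP00 : eval (0 : Fin m → F) P = 0 := by
    have h0 : constantCoeff P = 0 := by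
      have := hhom.coeff_eq_zero (d := 0) (by simp [map_zero])
      simpa [constantCoeff_eq] using this
    rw [eval_zero, h0]
  have hpd2 : ∀ i, (pderiv i P).IsHomogeneous 2 := fun i => isHomogeneous_pderiv' hhom i
  have hpd00 : ∀ i, eval (0 : Fin m → F) (pderiv i P) = 0 := by
    intro i
    have h0 : constantCoeff (pderiv i P) = 0 := by
      have := (hpd2 i).coeff_eq_zero (d := 0) (by simp [map_zero])
      simpa [constantCoeff_eq] using this
    rw [eval_zero, h0]
  -- Chevalley-Warning: a nontrivial zero
  obtain ⟨a, haP, ha0⟩ : ∃ a : Fin m → F, eval a P = 0 ∧ a ≠ 0 := by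
    haveI := ringChar.charP F
    have hp : (ringChar F).Prime := CharP.char_is_prime F (ringChar F)
    have hdvd : ringChar F ∣ Fintype.card {x : Fin m → F // eval x P = 0} :=
      char_dvd_card_solutions (ringChar F)
        (lt_of_le_of_lt hhom.totalDegree_le (by simpa using by omega : (3:ℕ) < Fintype.card (Fin m)))
    have hpos : 0 < Fintype.card {x : Fin m → F // eval x P = 0} :=
      Fintype.card_pos_iff.mpr ⟨⟨0, hP00⟩⟩
    have h2 : 1 < Fintype.card {x : Fin m → F // eval x P = 0} :=
      lt_of_lt_of_le hp.one_lt (Nat.le_of_dvd hpos hdvd)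
    obtain ⟨⟨a, ha⟩, hne⟩ := Fintype.exists_ne_of_one_lt_card h2 ⟨0, hP00⟩
    exact ⟨a, ha, fun h => hne (Subtype.ext h)⟩
  by_cases hsing : ∃ i, eval a (pderiv i P) ≠ 0
  · exact ⟨a, ha0, haP, hsing⟩
  push_neg at hsing
  by_cases hQ : (∑ i, C (a i) * pderiv i P : MvPolynomial (Fin m) F) = 0
  · -- degenerate case : contradiction with hnd
    exfalso
    obtain ⟨i₀, hai₀⟩ : ∃ i, a i ≠ 0 := by
      by_contra h; push_neg at h; exact ha0 (funext h)
    obtain ⟨n, rfl⟩ : ∃ n, m = n + 1 := ⟨m - 1, by omega⟩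
    have hCa : ∀ p : MvPolynomial (Fin (n+1)) F,
        aeval (fun i => (C (a i) : MvPolynomial (Fin (n+1)) F)) p = C (eval a p) := by
      intro p
      induction p using MvPolynomial.induction_on with
      | C c => simp
      | add p q hp hq => simp only [map_add, hp, hq]
      | mul_X p i hp => simp only [map_mul, hp, aeval_X, eval_X, C_mul]
    set t : MvPolynomial (Fin (n+1)) F := -(C (a i₀)⁻¹ * X i₀) with ht
    have hkey := (cubic_key (R := MvPolynomial (Fin (n+1)) F) hhom
      (fun i => C (a i)) X
      (by rw [hCa, haP, map_zero])
      (fun i => by rw [hCa, hsing i, map_zero]) t).1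
    simp only [aeval_X_left_apply] at hkey
    rw [hQ, zero_mul, zero_add] at hkey
    -- hkey : aeval (fun i => C (a i) * t + X i) P = P
    set e : Fin n → Fin (n+1) := i₀.succAbove with he
    set A : Matrix (Fin n) (Fin (n+1)) F := fun s j =>
      (if j = e s then 1 else 0) + (if j = i₀ then -(a (e s) * (a i₀)⁻¹) else 0) with hA
    set u : Fin (n+1) → MvPolynomial (Fin n) F := fun j =>
      if h : j = i₀ then 0 else X (Fin.exists_succAbove_eq h).choose with hu
    apply hnd
    refine ⟨n, by omega, A, aeval u P, ?_⟩
    have hcompw : ∀ p : MvPolynomial (Fin (n+1)) F,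
        aeval (fun s => ∑ j', C (A s j') * X j') (aeval u p)
          = aeval (fun j => aeval (fun s => ∑ j', C (A s j') * X j') (u j)) p := by
      intro p
      rw [show (aeval (fun s => ∑ j', C (A s j') * X j')) ((aeval u) p)
        = ((aeval (fun s => ∑ j', C (A s j') * X j')).comp (aeval u)) p from rfl, comp_aeval]
    have hw : ∀ j, aeval (fun s => ∑ j', C (A s j') * X j') (u j) = C (a j) * t + X j := by
      intro j
      by_cases hj : j = i₀
      · have hu0 : u j = 0 := by simp only [hu]; rw [dif_pos hj]
        rw [hu0, map_zero, hj, ht]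
        rw [mul_neg, ← mul_assoc, ← C_mul, mul_inv_cancel₀ hai₀, C_1, one_mul]
        ring
      · have hus : u j = X (Fin.exists_succAbove_eq hj).choose := by
          simp only [hu]; rw [dif_neg hj]
        have hspec : e (Fin.exists_succAbove_eq hj).choose = j :=
          (Fin.exists_succAbove_eq hj).choose_spec
        rw [hus, aeval_X]
        have hterm : ∀ j', C (A (Fin.exists_succAbove_eq hj).choose j') * X j'
            = (if j' = j then X j' else 0)
              + (if j' = i₀ then C (-(a j * (a i₀)⁻¹)) * X j' else 0) := by
          intro j'
          rw [hA]
          simp only [hspec]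
          by_cases h1 : j' = j
          · have h2 : ¬ j' = i₀ := by rw [h1]; exact hj
            rw [if_pos h1, if_neg h2]
            simp [h1, h2, hj]
          · by_cases h2 : j' = i₀
            · rw [if_neg h1, if_pos h2]
              simp [h1, h2, hj, (Ne.symm hj : ¬ i₀ = j)]
            · rw [if_neg h1, if_neg h2]
              simp [h1, h2, hj]
        rw [Finset.sum_congr rfl fun j' _ => hterm j']
        rw [Finset.sum_add_distrib]
        rw [Finset.sum_ite_eq' Finset.univ j (fun j' => X j'),
          Finset.sum_ite_eq' Finset.univ i₀ (fun j' => C (-(a j * (a i₀)⁻¹)) * X j')]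
        simp only [Finset.mem_univ, if_true]
        rw [ht]
        rw [map_neg, C_mul]
        ring
    rw [hcompw P, funext hw, hkey]
  · -- non-degenerate quadratic case : construct a nonsingular zero
    have hQhom : (∑ i, C (a i) * pderiv i P : MvPolynomial (Fin m) F).IsHomogeneous 2 :=
      IsHomogeneous.sum _ _ _ (fun i _ => ((hpd2 i).C_mul (a i)))
    obtain ⟨b, hb⟩ : ∃ b : Fin m → F, eval b (∑ i, C (a i) * pderiv i P) ≠ 0 := by
      by_contra h
      push_neg at h
      exact hQ (hQhom.eq_zero_of_forall_eval_eq_zero_of_le_card h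
        (by
          have h2 : (2 : Cardinal) ≤ (Cardinal.mk F) := by
            rw [Cardinal.two_le_iff]; exact ⟨0, 1, zero_ne_one⟩
          simpa using h2))
    have hbQ : eval b (∑ i, C (a i) * pderiv i P) = ∑ i, a i * eval b (pderiv i P) := by
      simp
    rw [hbQ] at hb
    set qb : F := ∑ i, a i * eval b (pderiv i P) with hqb
    set tt : F := -(eval b P) / qb with htt
    have hkey := cubic_key (R := F) hhom a b
      (by rw [aeval_eq, haP]) (fun i => by rw [aeval_eq, hsing i]) tt
    simp only [aeval_eq] at hkey
    set y : Fin m → F := fun i => a i * tt + b i with hy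
    have hyP : eval y P = 0 := by
      rw [hy]
      rw [hkey.1, ← hqb, htt]
      rw [mul_comm qb, div_mul_cancel₀ _ hb]
      ring
    have hygrad : ∑ i, a i * eval y (pderiv i P) = qb := by
      rw [hy, hkey.2]
    have hy0 : y ≠ 0 := by
      intro h
      rw [h] at hygrad
      apply hb
      rw [← hygrad]
      apply Finset.sum_eq_zero
      intro i _
      rw [hpd00 i, mul_zero]
    refine ⟨y, hy0, hyP, ?_⟩
    by_contra hno
    push_neg at hno
    apply hb
    rw [← hygrad]
    apply Finset.sum_eq_zero
    intro i _
    rw [hno i, mul_zero]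
end

section
/- Over a field k, suppose f(x) = x₁f₂(x₃,…,x_n) + f₃(x₂,…,x_n) and g(x) = x₁x₂ + g₂(x₃,…,x_n), where f₂ is a quadratic form, f₃ a cubic form, g₂ a quadratic form. Define H(x₂,…,x_n) = x₂·f₃(x₂,…,x_n) − f₂(x₃,…,x_n)·g₂(x₃,…,x_n). If (x₂,…,x_n) is a non-singular zero of H with x₂ ≠ 0, then setting x₁ = −x₂⁻¹g₂(x₃,…,x_n) gives a common zero x of f and g at which the gradients ∇f(x) and ∇g(x) are linearly independent. -/
open MvPolynomial

/-!
As polynomials `H = x₂ f - f₂ g`, and `H` does not involve `x₁`, so `H` and `∇H` take the same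
values at `a` and at its modification `x`. The choice of `x₁` makes `g(x) = 0`, and then
`x₂ f(x) = H(a) = 0`. Differentiating, `∇H(a) = x₂ ∇f(x) - f₂(x) ∇g(x)`, while the `x₁`-components
of `∇f(x)` and `∇g(x)` are `f₂(x)` and `x₂`; a vanishing combination of `∇f(x)` and `∇g(x)` is
therefore a multiple of `∇H(a) ≠ 0` and must be trivial.
-/

/-- `φ v • u - φ u • v` is the contraction of `u ∧ v` with `φ`, which vanishes when `u`, `v` are
dependent. -/
theorem LinearIndependent.pair_of_smul_sub_smul_ne_zero {K M : Type*} [Field K] [AddCommGroup M]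
    [Module K M] {u v : M} (φ : M →ₗ[K] K) (h : φ v • u - φ u • v ≠ 0) :
    LinearIndependent K ![u, v] := by
  rw [LinearIndependent.pair_iff]
  intro s t hst
  have hφ : s * φ u + t * φ v = 0 := by simpa using congrArg φ hst
  have hs : s • (φ v • u - φ u • v) = 0 := by
    linear_combination (norm := module) φ v • hst - hφ • v
  have ht : t • (φ v • u - φ u • v) = 0 := by
    linear_combination (norm := module) hφ • u - φ u • hst
  exact ⟨(smul_eq_zero.1 hs).resolve_right h, (smul_eq_zero.1 ht).resolve_right h⟩

namespace MvPolynomial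

variable {σ R : Type*} [CommSemiring R]

theorem vars_pderiv_subset (j : σ) (p : MvPolynomial σ R) : (pderiv j p).vars ⊆ p.vars := by
  intro i hi
  obtain ⟨d, hd, hid⟩ := (mem_vars_iff_mem_support i).1 hi
  refine (mem_vars_iff_mem_support i).2 ⟨d + Finsupp.single j 1, ?_, ?_⟩
  · rw [mem_support_iff, coeff_pderiv] at hd
    exact mem_support_iff.2 (left_ne_zero_of_mul hd)
  · simp only [Finsupp.mem_support_iff, Finsupp.add_apply] at hid ⊢
    omega

theorem eval_update_of_notMem_vars [DecidableEq σ] {p : MvPolynomial σ R} {j : σ}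
    (h : j ∉ p.vars) (a : σ → R) (c : R) :
    eval (Function.update a j c) p = eval a p :=
  eval₂Hom_congr' rfl (fun _ hi _ => Function.update_of_ne (ne_of_mem_of_not_mem hi h) _ _) rfl

end MvPolynomial

theorem nonsingular_zero_of_H_general {k : Type*} [Field k] (n : ℕ)
    (f₂ f₃ g₂ : MvPolynomial (Fin (n + 2)) k)
    (hf₂v : (0 : Fin (n + 2)) ∉ f₂.vars ∧ (1 : Fin (n + 2)) ∉ f₂.vars)
    (hf₃v : (0 : Fin (n + 2)) ∉ f₃.vars)
    (hg₂v : (0 : Fin (n + 2)) ∉ g₂.vars ∧ (1 : Fin (n + 2)) ∉ g₂.vars)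
    (f g H : MvPolynomial (Fin (n + 2)) k)
    (hf : f = X 0 * f₂ + f₃)
    (hg : g = X 0 * X 1 + g₂)
    (hH : H = X 1 * f₃ - f₂ * g₂)
    (a : Fin (n + 2) → k) (haH : eval a H = 0)
    (hans : ∃ i, eval a (pderiv i H) ≠ 0) (ha1 : a 1 ≠ 0)
    (x : Fin (n + 2) → k) (hx : x = Function.update a 0 (-(a 1)⁻¹ * eval a g₂)) :
    eval x f = 0 ∧ eval x g = 0 ∧
      LinearIndependent k ![fun i => eval x (pderiv i f), fun i => eval x (pderiv i g)] := by
  have hx_eq {p : MvPolynomial (Fin (n + 2)) k} (hp : 0 ∉ p.vars) : eval x p = eval a p :=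
    hx ▸ eval_update_of_notMem_vars hp a _
  have hx0 : x 0 = -(a 1)⁻¹ * eval a g₂ := by simp [hx]
  have hx1 : x 1 = a 1 := by simp [hx]
  have hH_vars : 0 ∉ H.vars := by
    rw [hH]
    intro h0
    have := Finset.union_subset_union (vars_mul _ _) (vars_mul _ _) (vars_sub_subset _ h0)
    simp [vars_X, hf₃v, hf₂v.1, hg₂v.1] at this
  have hHfg : H = X 1 * f - f₂ * g := by rw [hH, hf, hg]; ring
  have hgx : eval x g = 0 := by
    rw [hg, map_add, map_mul, eval_X, eval_X, hx_eq hg₂v.1, hx0, hx1]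
    field_simp
    ring
  have hfx : eval x f = 0 := by
    have h := congrArg (eval x) hHfg
    rw [hx_eq hH_vars, haH, map_sub, map_mul, map_mul, eval_X, hgx, hx1] at h
    simpa [ha1] using h
  refine ⟨hfx, hgx, LinearIndependent.pair_of_smul_sub_smul_ne_zero (LinearMap.proj 0) ?_⟩
  have hf0 : pderiv 0 f = f₂ := by
    simp [hf, pderiv_eq_zero_of_notMem_vars hf₂v.1, pderiv_eq_zero_of_notMem_vars hf₃v]
  have hg0 : pderiv 0 g = X 1 := by
    simp [hg, pderiv_eq_zero_of_notMem_vars hg₂v.1]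
  have hgrad (i : Fin (n + 2)) :
      eval a (pderiv i H) = x 1 * eval x (pderiv i f) - eval x f₂ * eval x (pderiv i g) := by
    rw [← hx_eq fun h => hH_vars (vars_pderiv_subset i H h), hHfg]
    simp [hfx, hgx]
  obtain ⟨i, hi⟩ := hans
  intro h
  exact hi (by simpa [hgrad, hf0, hg0] using congrFun h i)

/-- If `f = x₁f₂ + f₃`, `g = x₁x₂ + g₂` and `H = x₂f₃ - f₂g₂`, then any
non-singular zero of `H` with `x₂ ≠ 0` lifts (by setting
`x₁ = -x₂⁻¹ g₂`) to a common zero of `(f,g)` with linearly independent gradients.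
Variable `0` plays the role of `x₁` and variable `1` that of `x₂`. -/
theorem nonsingular_zero_of_H {k : Type*} [Field k] (n : ℕ)
    (f₂ f₃ g₂ : MvPolynomial (Fin (n + 2)) k)
    (hf₂ : f₂.IsHomogeneous 2) (hf₃ : f₃.IsHomogeneous 3) (hg₂ : g₂.IsHomogeneous 2)
    (hf₂v : (0 : Fin (n + 2)) ∉ f₂.vars ∧ (1 : Fin (n + 2)) ∉ f₂.vars)
    (hf₃v : (0 : Fin (n + 2)) ∉ f₃.vars)
    (hg₂v : (0 : Fin (n + 2)) ∉ g₂.vars ∧ (1 : Fin (n + 2)) ∉ g₂.vars)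
    (f g H : MvPolynomial (Fin (n + 2)) k)
    (hf : f = X 0 * f₂ + f₃)
    (hg : g = X 0 * X 1 + g₂)
    (hH : H = X 1 * f₃ - f₂ * g₂)
    (a : Fin (n + 2) → k) (haH : eval a H = 0)
    (hans : ∃ i, eval a (pderiv i H) ≠ 0) (ha1 : a 1 ≠ 0)
    (x : Fin (n + 2) → k) (hx : x = Function.update a 0 (-(a 1)⁻¹ * eval a g₂)) :
    eval x f = 0 ∧ eval x g = 0 ∧
      LinearIndependent k ![fun i => eval x (pderiv i f), fun i => eval x (pderiv i g)] :=
  nonsingular_zero_of_H_general n f₂ f₃ g₂ hf₂v hf₃v hg₂v f g H hf hg hH a haH hans ha1 x hx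
end

section
/- Let 𝒪_K be the ring of integers of a p-adic field with uniformizer π, and let (F,G) be a system of a cubic and a quadratic form over 𝒪_K that is (α,β)-reduced for some α > 3, β > 2. Then h(G) > 2, h(F − L·G) > 3 for every linear form L ∈ 𝒪_K[x], and h(F,G) > 5. -/
/-!
Suppose `G ≡ L₁H₁ + ⋯ + L_rH_r (mod π)` with linear forms `Lᵢ`. Working one form at a time, a
unimodular column operation followed by scaling one variable by `π` kills a linear form modulo
`π`, and composing these gives `τ` with `v(det τ) = s ≤ r` and `Lᵢ(τx) ≡ 0 (mod π)` for all `i`.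
Then `π ∣ G(τx)`, a reduction step with `(c₁, c₂) = (0, 1)` whose gain `β - s` is positive as soon
as `r < β`. The same `τ` applied to `F - L·G` gives a step with `(c₁, c₂) = (1, 0)` when `r < α`,
and applied to the system one with `(c₁, c₂) = (1, 1)` when `r < α + β`.
-/

open MvPolynomial

/-- The substitution `x ↦ τ x` applied to a polynomial. -/
noncomputable def subst {𝒪 : Type*} [CommRing 𝒪] {n : ℕ}
    (τ : Matrix (Fin n) (Fin n) 𝒪) (P : MvPolynomial (Fin n) 𝒪) :
    MvPolynomial (Fin n) 𝒪 :=
  MvPolynomial.aeval (fun i => ∑ j, C (τ i j) * X j) P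

/-- `(F,G) ≻_{(α,β)} (F',G')` for some admissible `T`, `τ`: the pair `(F,G)` of a
cubic and quadratic form is `(α,β)`-reduced if no such step exists. -/
def IsReducedPair {𝒪 : Type*} [CommRing 𝒪] (π : 𝒪) {n : ℕ}
    (F G : MvPolynomial (Fin n) 𝒪) (α β : ℝ) : Prop :=
  ¬ ∃ (c₁ c₂ s : ℕ) (L : MvPolynomial (Fin n) 𝒪)
      (τ : Matrix (Fin n) (Fin n) 𝒪) (u : 𝒪),
      L.IsHomogeneous 1 ∧ IsUnit u ∧ τ.det = π ^ s * u ∧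
      (C (π ^ c₁) ∣ (subst τ F + L * subst τ G)) ∧
      (C (π ^ c₂) ∣ subst τ G) ∧
      (c₁ : ℝ) * α + (c₂ : ℝ) * β - (s : ℝ) > 0

/-- `h(P) ≤ h` modulo `π`: `P ≡ L₁H₁ + ⋯ + L_hH_h (mod π)` with the `L i`
linear forms over `𝒪`. -/
def hModLe {𝒪 : Type*} [CommRing 𝒪] (π : 𝒪) {n : ℕ}
    (P : MvPolynomial (Fin n) 𝒪) (h : ℕ) : Prop :=
  ∃ (L Q : Fin h → MvPolynomial (Fin n) 𝒪),
    (∀ i, (L i).IsHomogeneous 1) ∧ C π ∣ (P - ∑ i, L i * Q i)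

/-- `h(F,G) ≤ h` modulo `π`: for some linear form `l`, both `F - l·G` and `G` lie
modulo `π` in the ideal generated by the same `h` linear forms. -/
def hSysModLe {𝒪 : Type*} [CommRing 𝒪] (π : 𝒪) {n : ℕ}
    (F G : MvPolynomial (Fin n) 𝒪) (h : ℕ) : Prop :=
  ∃ l : MvPolynomial (Fin n) 𝒪, l.IsHomogeneous 1 ∧
    ∃ (L Q M : Fin h → MvPolynomial (Fin n) 𝒪),
      (∀ i, (L i).IsHomogeneous 1) ∧
      C π ∣ (F - l * G - ∑ i, L i * Q i) ∧ C π ∣ (G - ∑ i, L i * M i)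

open IsLocalRing Matrix

section LinearForms

variable {R : Type*} [CommRing R]

theorem MvPolynomial.IsHomogeneous.eq_sum_C_coeff_mul_X {σ : Type*} [Fintype σ]
    {P : MvPolynomial σ R} (hP : P.IsHomogeneous 1) :
    P = ∑ j, C (P.coeff (Finsupp.single j 1)) * X j := by
  classical
  ext m
  simp only [coeff_sum, coeff_C_mul, coeff_X, mul_ite, mul_one, mul_zero]
  by_cases hm : m.degree = 1
  · obtain ⟨j, rfl⟩ := (Finsupp.sum_eq_one_iff m).mp hm
    simp [Finsupp.single_left_inj one_ne_zero]
  · rw [hP.coeff_eq_zero hm, eq_comm]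
    refine Finset.sum_eq_zero fun j _ => if_neg ?_
    rintro rfl
    exact hm (Finsupp.degree_single j 1)

variable {n : ℕ}

theorem MvPolynomial.IsHomogeneous.subst {P : MvPolynomial (Fin n) R} {m : ℕ}
    (hP : P.IsHomogeneous m) (τ : Matrix (Fin n) (Fin n) R) : (subst τ P).IsHomogeneous m := by
  simpa [_root_.subst] using hP.aeval _ fun i =>
    IsHomogeneous.sum _ _ _ fun j _ => isHomogeneous_C_mul_X (τ i j) j

theorem subst_sum_C_mul_X (τ : Matrix (Fin n) (Fin n) R) (a : Fin n → R) :
    subst τ (∑ i, C (a i) * X i) = ∑ j, C ((a ᵥ* τ) j) * X j := by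
  simp only [subst, map_sum, _root_.map_mul, aeval_C, aeval_X, algebraMap_eq,
    Finset.mul_sum, vecMul, dotProduct, Finset.sum_mul, mul_assoc]
  exact Finset.sum_comm

theorem subst_sub_mul (τ : Matrix (Fin n) (Fin n) R) (F l G : MvPolynomial (Fin n) R) :
    subst τ (F - l * G) = subst τ F + -subst τ l * subst τ G := by
  simp only [subst, map_sub, _root_.map_mul]
  ring

theorem C_dvd_subst {π : R} (τ : Matrix (Fin n) (Fin n) R) {P : MvPolynomial (Fin n) R}
    (h : C π ∣ P) : C π ∣ subst τ P := by
  have := map_dvd (aeval fun i => ∑ j, C (τ i j) * X j) h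
  rwa [aeval_C] at this

theorem C_dvd_subst_of_C_dvd_sub_sum_mul {π : R} {r : ℕ} (τ : Matrix (Fin n) (Fin n) R)
    {P : MvPolynomial (Fin n) R} {L Q : Fin r → MvPolynomial (Fin n) R}
    (h : C π ∣ P - ∑ i, L i * Q i) (hL : ∀ i, C π ∣ subst τ (L i)) : C π ∣ subst τ P := by
  have hsum : C π ∣ subst τ (∑ i, L i * Q i) := by
    simpa [subst] using Finset.dvd_sum fun i _ => (hL i).mul_right (subst τ (Q i))
  simpa [subst] using dvd_add (C_dvd_subst τ h) hsum

end LinearForms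

section LocalRing

variable {R : Type*} [CommRing R] [IsLocalRing R] {π : R}

theorem isUnit_of_not_dvd (hπ : maximalIdeal R = Ideal.span {π}) {x : R} (hx : ¬π ∣ x) :
    IsUnit x := by
  by_contra h
  exact hx (Ideal.mem_span_singleton.mp (hπ ▸ h))

variable {ι : Type*} [Fintype ι] [DecidableEq ι]

theorem exists_associated_det_dvd_vecMul (hπ : maximalIdeal R = Ideal.span {π}) (v : ι → R) :
    ∃ s ≤ 1, ∃ τ : Matrix ι ι R, Associated (π ^ s) τ.det ∧ ∀ j, π ∣ (v ᵥ* τ) j := by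
  by_cases hv : ∀ j, π ∣ v j
  · exact ⟨0, zero_le_one, 1, by simp, by simpa using hv⟩
  obtain ⟨j₀, hj₀⟩ := not_forall.mp hv
  obtain ⟨u, hu⟩ := isUnit_of_not_dvd hπ hj₀
  -- clear `v` against its unit entry `v j₀` by column operations, then scale column `j₀` by `π`
  set w : ι → R := π • Pi.single j₀ 1 - (↑u⁻¹ : R) • v
  refine ⟨1, le_rfl, 1 + vecMulVec (Pi.single j₀ 1) w, ?_, fun j => ?_⟩
  · rw [vecMulVec_eq Unit, det_one_add_replicateCol_mul_replicateRow]
    simp [w, ← hu]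
  · have : v ᵥ* (1 + vecMulVec (Pi.single j₀ 1) w) = (v j₀ * π) • Pi.single j₀ 1 := by
      rw [vecMul_add, vecMul_one, vecMul_vecMulVec, dotProduct_single, mul_one, ← hu]
      ext k
      simp only [w, Pi.add_apply, Pi.smul_apply, Pi.sub_apply, smul_eq_mul]
      linear_combination -v k * u.mul_inv
    rw [this]
    exact (Dvd.intro_left _ rfl).mul_right _

theorem exists_associated_det_forall_dvd_vecMul (hπ : maximalIdeal R = Ideal.span {π}) :
    ∀ {r : ℕ} (a : Fin r → ι → R),
      ∃ s ≤ r, ∃ τ : Matrix ι ι R, Associated (π ^ s) τ.det ∧ ∀ i j, π ∣ (a i ᵥ* τ) j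
  | 0, _ => ⟨0, le_rfl, 1, by simp, fun i => i.elim0⟩
  | r + 1, a => by
    obtain ⟨s₁, hs₁, τ₁, hdet₁, hdvd₁⟩ :=
      exists_associated_det_forall_dvd_vecMul hπ fun i : Fin r => a i.castSucc
    obtain ⟨s₂, hs₂, τ₂, hdet₂, hdvd₂⟩ :=
      exists_associated_det_dvd_vecMul hπ (a (Fin.last r) ᵥ* τ₁)
    refine ⟨s₁ + s₂, by omega, τ₁ * τ₂, ?_, fun i j => ?_⟩
    · rw [det_mul, pow_add]
      exact hdet₁.mul_mul hdet₂
    · rw [← vecMul_vecMul]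
      induction i using Fin.lastCases with
      | last => exact hdvd₂ j
      | cast i => exact Finset.dvd_sum fun k _ => (hdvd₁ i k).mul_right _

theorem exists_associated_det_forall_C_dvd_subst (hπ : maximalIdeal R = Ideal.span {π})
    {n r : ℕ} (L : Fin r → MvPolynomial (Fin n) R) (hL : ∀ i, (L i).IsHomogeneous 1) :
    ∃ s ≤ r, ∃ τ : Matrix (Fin n) (Fin n) R,
      Associated (π ^ s) τ.det ∧ ∀ i, C π ∣ subst τ (L i) := by
  obtain ⟨s, hs, τ, hdet, hdvd⟩ := exists_associated_det_forall_dvd_vecMul hπ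
    fun i j => (L i).coeff (Finsupp.single j 1)
  refine ⟨s, hs, τ, hdet, fun i => ?_⟩
  rw [(hL i).eq_sum_C_coeff_mul_X, subst_sum_C_mul_X]
  exact Finset.dvd_sum fun j _ => (map_dvd C (hdvd i j)).mul_right _

end LocalRing

section ReducedPair

variable {R : Type*} [CommRing R] {π : R} {n : ℕ} {F G : MvPolynomial (Fin n) R} {α β : ℝ}

theorem IsReducedPair.le_of_subst (hred : IsReducedPair π F G α β) {c₁ c₂ s : ℕ}
    {L : MvPolynomial (Fin n) R} {τ : Matrix (Fin n) (Fin n) R} (hL : L.IsHomogeneous 1)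
    (hdet : Associated (π ^ s) τ.det) (hF : C (π ^ c₁) ∣ subst τ F + L * subst τ G)
    (hG : C (π ^ c₂) ∣ subst τ G) : c₁ * α + c₂ * β ≤ s := by
  obtain ⟨u, hu⟩ := hdet
  by_contra h
  exact hred ⟨c₁, c₂, s, L, τ, u, hL, u.isUnit, hu.symm, hF, hG, by linarith⟩

variable [IsLocalRing R]

theorem IsReducedPair.not_hModLe (hred : IsReducedPair π F G α β)
    (hπ : maximalIdeal R = Ideal.span {π}) {r : ℕ} (hr : r < β) : ¬hModLe π G r := by
  rintro ⟨L, Q, hL, hGL⟩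
  obtain ⟨s, hs, τ, hdet, hLτ⟩ := exists_associated_det_forall_C_dvd_subst hπ L hL
  have hβs := hred.le_of_subst (c₁ := 0) (c₂ := 1) (isHomogeneous_zero _ _ _) hdet (by simp)
    (by simpa using C_dvd_subst_of_C_dvd_sub_sum_mul τ hGL hLτ)
  have hsr : (s : ℝ) ≤ r := by exact_mod_cast hs
  norm_num at hβs
  linarith

theorem IsReducedPair.not_hModLe_sub_mul (hred : IsReducedPair π F G α β)
    (hπ : maximalIdeal R = Ideal.span {π}) {l : MvPolynomial (Fin n) R} (hl : l.IsHomogeneous 1)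
    {r : ℕ} (hr : r < α) : ¬hModLe π (F - l * G) r := by
  rintro ⟨L, Q, hL, hFL⟩
  obtain ⟨s, hs, τ, hdet, hLτ⟩ := exists_associated_det_forall_C_dvd_subst hπ L hL
  have hαs := hred.le_of_subst (c₁ := 1) (c₂ := 0) (hl.subst τ).neg hdet
    (by simpa [subst_sub_mul] using C_dvd_subst_of_C_dvd_sub_sum_mul τ hFL hLτ) (by simp)
  have hsr : (s : ℝ) ≤ r := by exact_mod_cast hs
  norm_num at hαs
  linarith

theorem IsReducedPair.not_hSysModLe (hred : IsReducedPair π F G α β)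
    (hπ : maximalIdeal R = Ideal.span {π}) {r : ℕ} (hr : r < α + β) : ¬hSysModLe π F G r := by
  rintro ⟨l, hl, L, Q, M, hL, hFL, hGL⟩
  obtain ⟨s, hs, τ, hdet, hLτ⟩ := exists_associated_det_forall_C_dvd_subst hπ L hL
  have hαβs := hred.le_of_subst (c₁ := 1) (c₂ := 1) (hl.subst τ).neg hdet
    (by simpa [subst_sub_mul] using C_dvd_subst_of_C_dvd_sub_sum_mul τ hFL hLτ)
    (by simpa using C_dvd_subst_of_C_dvd_sub_sum_mul τ hGL hLτ)
  have hsr : (s : ℝ) ≤ r := by exact_mod_cast hs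
  norm_num at hαβs
  linarith

end ReducedPair

theorem reduced_pair_h_invariants_general {𝒪 : Type*} [CommRing 𝒪] [IsDomain 𝒪]
    [IsDiscreteValuationRing 𝒪] (π : 𝒪) (hπ : Irreducible π) (n : ℕ)
    (F G : MvPolynomial (Fin n) 𝒪)
    (α β : ℝ) (hα : 3 < α) (hβ : 2 < β)
    (hred : IsReducedPair π F G α β) :
    (¬ hModLe π G 2) ∧
    (∀ L : MvPolynomial (Fin n) 𝒪, L.IsHomogeneous 1 → ¬ hModLe π (F - L * G) 3) ∧
    (¬ hSysModLe π F G 5) :=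
  ⟨hred.not_hModLe hπ.maximalIdeal_eq (by norm_num [hβ]),
    fun _ hL => hred.not_hModLe_sub_mul hπ.maximalIdeal_eq hL (by norm_num [hα]),
    hred.not_hSysModLe hπ.maximalIdeal_eq (by norm_num; linarith)⟩

/-- If the pair `(F,G)` of a cubic and a quadratic form over `𝒪_K` is
`(α,β)`-reduced with `α > 3`, `β > 2`, then `h(G) > 2`, `h(F - L·G) > 3` for all
linear forms `L`, and `h(F,G) > 5`. -/
theorem reduced_pair_h_invariants {𝒪 : Type*} [CommRing 𝒪] [IsDomain 𝒪]
    [IsDiscreteValuationRing 𝒪] (π : 𝒪) (hπ : Irreducible π) (n : ℕ)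
    (F G : MvPolynomial (Fin n) 𝒪)
    (hF : F.IsHomogeneous 3) (hG : G.IsHomogeneous 2)
    (α β : ℝ) (hα : 3 < α) (hβ : 2 < β)
    (hred : IsReducedPair π F G α β) :
    (¬ hModLe π G 2) ∧
    (∀ L : MvPolynomial (Fin n) 𝒪, L.IsHomogeneous 1 → ¬ hModLe π (F - L * G) 3) ∧
    (¬ hSysModLe π F G 5) :=
  reduced_pair_h_invariants_general π hπ n F G α β hα hβ hred
end

section
/- Let d₁,…,d_r be positive integers, r ≥ 1, and let a₁ ≤ a₂ ≤ ⋯ ≤ a_n and b₁,…,b_r be non-negative integers with b₁/d₁ ≤ ⋯ ≤ b_r/d_r. Let w₁ < w₂ < ⋯ < w_r ≤ n be indices satisfying w_{i+1} − w_i ≥ d_i² for 1 ≤ i ≤ r−1, w₁ ≥ 1, n ≥ w_r + d_r², and suppose d_i·a_{w_i} ≥ b_i for all i. Then with ε = 1/(r·max_i d_i), one has a₁ + ⋯ + a_n ≥ Σ_{i=1}^r (d_i + ε)·b_i. -/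
/-!
Reserve for each index `i` the block of `dᵢ²` consecutive terms of `a` starting at `w_i`; by the
spacing hypotheses these blocks are disjoint and lie below `n`, and `a` is increasing, so block `i`
sums to at least `dᵢ² a_{w_i} ≥ dᵢ bᵢ`. The remaining term `a_n`, split into `r` shares `a_n / r`, pays
for the extra `ε bᵢ = bᵢ / (r maxⱼ dⱼ) ≤ a_{w_i} / r`.
-/

open Finset

theorem sum_card_nsmul_le_sum_of_pairwiseDisjoint {ι κ M : Type*} [AddCommMonoid M] [Preorder M]
    [AddLeftMono M] {s : Finset ι} {t : Finset κ} {B : ι → Finset κ} {f : ι → M} {a : κ → M}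
    (hdisj : (s : Set ι).PairwiseDisjoint B) (hsub : ∀ i ∈ s, B i ⊆ t)
    (ha : ∀ j ∈ t, 0 ≤ a j) (hf : ∀ i ∈ s, ∀ j ∈ B i, f i ≤ a j) :
    ∑ i ∈ s, #(B i) • f i ≤ ∑ j ∈ t, a j := by
  classical
  calc ∑ i ∈ s, #(B i) • f i
      ≤ ∑ i ∈ s, ∑ j ∈ B i, a j := sum_le_sum fun i hi => card_nsmul_le_sum _ _ _ (hf i hi)
    _ = ∑ j ∈ s.biUnion B, a j := (sum_biUnion hdisj).symm
    _ ≤ ∑ j ∈ t, a j :=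
        sum_le_sum_of_subset_of_nonneg (biUnion_subset.2 hsub) fun j hj _ => ha j hj

section Spaced

variable {w c : ℕ → ℕ} {r : ℕ} (h : ∀ i, 1 ≤ i → i < r → w i + c i ≤ w (i + 1))
include h

theorem add_le_of_spaced {i j : ℕ} (hi : 1 ≤ i) (hij : i < j) (hj : j ≤ r) :
    w i + c i ≤ w j := by
  induction j, hij using Nat.le_induction with
  | base => exact h i hi hj
  | succ k hik ih => exact (ih (by omega)).trans (le_self_add.trans (h k (by omega) hj))

theorem le_of_spaced {i j : ℕ} (hi : 1 ≤ i) (hij : i ≤ j) (hj : j ≤ r) : w i ≤ w j := by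
  rcases hij.eq_or_lt with rfl | hij
  · rfl
  · exact le_self_add.trans (add_le_of_spaced h hi hij hj)

theorem pairwiseDisjoint_Ico_of_spaced :
    (Icc 1 r : Set ℕ).PairwiseDisjoint fun i => Ico (w i) (w i + c i) := by
  intro i hi j hj hij
  simp only [coe_Icc, Set.mem_Icc] at hi hj
  rcases hij.lt_or_gt with hij | hij
  · exact Ico_disjoint_Ico_consecutive _ _ _ |>.mono_right (Ico_subset_Ico_left
      (add_le_of_spaced h hi.1 hij hj.2))
  · exact Ico_disjoint_Ico_consecutive _ _ _ |>.mono_right (Ico_subset_Ico_left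
      (add_le_of_spaced h hj.1 hij hi.2)) |>.symm

theorem one_le_and_add_le_of_spaced {n : ℕ} (hw1 : 1 ≤ w 1) (hwn : w r + c r ≤ n) :
    ∀ i ∈ Icc 1 r, 1 ≤ w i ∧ w i + c i ≤ n := by
  intro i hi
  rw [mem_Icc] at hi
  refine ⟨hw1.trans (le_of_spaced h le_rfl hi.1 hi.2), ?_⟩
  rcases hi.2.eq_or_lt with rfl | hir
  · exact hwn
  · exact (add_le_of_spaced h hi.1 hir le_rfl).trans (le_self_add.trans hwn)

end Spaced

theorem div_mul_le_div_of_le_mul {K : Type*} [Field K] [LinearOrder K] [IsStrictOrderedRing K]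
    {b y r D : K} (hr : 0 ≤ r) (hD : 0 ≤ D) (hy : 0 ≤ y) (h : b ≤ D * y) :
    b / (r * D) ≤ y / r := by
  rcases hD.eq_or_lt with rfl | hD
  · simpa using div_nonneg hy hr
  · rw [mul_comm, ← div_div]
    exact div_le_div_of_nonneg_right ((div_le_iff₀ hD).2 (by linarith)) hr

theorem add_one_div_mul_le_sq_mul_add_div {K : Type*} [Field K] [LinearOrder K]
    [IsStrictOrderedRing K] {d D b x y r : K} (hd : 0 ≤ d) (hdD : d ≤ D) (hr : 0 ≤ r)
    (hx : 0 ≤ x) (hxy : x ≤ y) (hb : b ≤ d * x) :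
    (d + 1 / (r * D)) * b ≤ d ^ 2 * x + y / r := by
  have hdb : d * b ≤ d ^ 2 * x := by
    rw [sq, mul_assoc]
    exact mul_le_mul_of_nonneg_left hb hd
  have hbD : b ≤ D * y :=
    hb.trans (mul_le_mul hdD hxy hx (hd.trans hdD))
  have hshare := div_mul_le_div_of_le_mul hr (hd.trans hdD) (hx.trans hxy) hbD
  rw [add_mul, one_div_mul_eq_div]
  exact add_le_add hdb hshare

theorem bottomless_key_inequality_general (r n : ℕ) (hr : 1 ≤ r)
    (d a b w : ℕ → ℕ)
    (ha : ∀ i j, 1 ≤ i → i ≤ j → j ≤ n → a i ≤ a j)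
    (hw1 : 1 ≤ w 1)
    (hwspace : ∀ i, 1 ≤ i → i ≤ r - 1 → w i + d i ^ 2 ≤ w (i + 1))
    (hwn : w r + d r ^ 2 ≤ n)
    (hab : ∀ i, 1 ≤ i → i ≤ r → b i ≤ d i * a (w i)) :
    ∑ i ∈ Finset.Icc 1 r,
        ((d i : ℚ) + 1 / ((r : ℚ) * (((Finset.Icc 1 r).sup d : ℕ) : ℚ))) * (b i : ℚ)
      ≤ ∑ i ∈ Finset.Icc 1 n, (a i : ℚ) := by
  have hspaced : ∀ i, 1 ≤ i → i < r → w i + d i ^ 2 ≤ w (i + 1) :=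
    fun i hi hir => hwspace i hi (by omega)
  have hwbound := one_le_and_add_le_of_spaced hspaced hw1 hwn
  have hblock : ∀ i ∈ Icc 1 r, Ico (w i) (w i + d i ^ 2) ⊆ Ico 1 n :=
    fun i hi => Ico_subset_Ico (hwbound i hi).1 (hwbound i hi).2
  have hmono : ∀ i ∈ Icc 1 r, ∀ j ∈ Ico (w i) (w i + d i ^ 2), (a (w i) : ℚ) ≤ a j :=
    fun i hi j hj => by
      have hjn := hblock i hi hj
      simp only [mem_Ico] at hj hjn
      exact_mod_cast ha _ _ (hwbound i hi).1 hj.1 hjn.2.le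
  have hblocks : ∑ i ∈ Icc 1 r, (d i : ℚ) ^ 2 * a (w i) ≤ ∑ j ∈ Ico 1 n, (a j : ℚ) := by
    simpa [nsmul_eq_mul] using sum_card_nsmul_le_sum_of_pairwiseDisjoint
      (pairwiseDisjoint_Ico_of_spaced hspaced) hblock (fun j _ => Nat.cast_nonneg (a j)) hmono
  have hterm : ∀ i ∈ Icc 1 r, ((d i : ℚ) + 1 / (r * ((Icc 1 r).sup d : ℕ))) * b i
      ≤ (d i : ℚ) ^ 2 * a (w i) + a n / r := fun i hi => by
    obtain ⟨hwi, hwin⟩ := hwbound i hi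
    refine add_one_div_mul_le_sq_mul_add_div (Nat.cast_nonneg _) ?_ (Nat.cast_nonneg _)
      (Nat.cast_nonneg _) ?_ ?_
    · exact_mod_cast le_sup (f := d) hi
    · exact_mod_cast ha _ _ hwi (le_self_add.trans hwin) le_rfl
    · rw [mem_Icc] at hi
      exact_mod_cast hab i hi.1 hi.2
  have hn : 1 ≤ n := (hwbound r (mem_Icc.2 ⟨hr, le_rfl⟩)).1.trans (le_self_add.trans hwn)
  calc _ ≤ ∑ i ∈ Icc 1 r, ((d i : ℚ) ^ 2 * a (w i) + a n / r) := sum_le_sum hterm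
    _ = ∑ i ∈ Icc 1 r, (d i : ℚ) ^ 2 * a (w i) + a n := by
        rw [sum_add_distrib, sum_const, Nat.card_Icc, Nat.add_sub_cancel, nsmul_eq_mul,
          mul_div_cancel₀ _ (Nat.cast_ne_zero.2 (by omega))]
    _ ≤ ∑ j ∈ Ico 1 n, (a j : ℚ) + a n := by gcongr
    _ = ∑ j ∈ Icc 1 n, (a j : ℚ) := (sum_Ico_succ_top hn _).symm

/-- The key inequality in the proof of the theorem on bottomless systems:
under the stated orderings and spacings (all sequences 1-indexed),
`a₁ + ⋯ + a_n ≥ Σᵢ (dᵢ + ε)·bᵢ` with `ε = 1/(r·maxᵢ dᵢ)`. -/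
theorem bottomless_key_inequality (r n : ℕ) (hr : 1 ≤ r)
    (d a b w : ℕ → ℕ)
    (hd : ∀ i, 1 ≤ i → i ≤ r → 0 < d i)
    (ha : ∀ i j, 1 ≤ i → i ≤ j → j ≤ n → a i ≤ a j)
    (hb : ∀ i, 1 ≤ i → i < r → (b i : ℚ) / (d i : ℚ) ≤ (b (i + 1) : ℚ) / (d (i + 1) : ℚ))
    (hw1 : 1 ≤ w 1)
    (hwmono : ∀ i, 1 ≤ i → i < r → w i < w (i + 1))
    (hwspace : ∀ i, 1 ≤ i → i ≤ r - 1 → w i + d i ^ 2 ≤ w (i + 1))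
    (hwn : w r + d r ^ 2 ≤ n)
    (hab : ∀ i, 1 ≤ i → i ≤ r → b i ≤ d i * a (w i)) :
    ∑ i ∈ Finset.Icc 1 r,
        ((d i : ℚ) + 1 / ((r : ℚ) * (((Finset.Icc 1 r).sup d : ℕ) : ℚ))) * (b i : ℚ)
      ≤ ∑ i ∈ Finset.Icc 1 n, (a i : ℚ) :=
  bottomless_key_inequality_general r n hr d a b w ha hw1 hwspace hwn hab
end
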